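/- Let f : X → X be a continuous map of a compact metric space such that f admits the shadowing-with-periodic-orbits property: for every δ > 0 there exists δ' > 0 such that every δ'-periodic pseudo-orbit is δ-shadowed by a genuine periodic orbit. Let g : X → ℝ be continuous with the property that ∑_{j=0}^{n-1} g(f^j(p)) = 0 for every periodic point p with f^n(p) = p. Then for every recurrent point x, lim sup_{k} |(1/n_k) ∑_{j=0}^{n_k−1} g(f^j(x))| = 0 along the return-time sequence n_k of x, i.e., the Birkhoff sums of g along returns of x are o(n_k). -/

import Mathlib

open Filter

/-- Anosov-closing-lemma argument: if periodic pseudo-orbits are shadowed by genuine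
periodic orbits, and the continuous function `g` has zero Birkhoff sums over every
periodic orbit, then along the return times of any recurrent point `x` the normalized
Birkhoff sums of `g` tend to `0`. -/
theorem birkhoff_sums_along_returns {X : Type*} [MetricSpace X] [CompactSpace X]
    (f : X → X) (hf : Continuous f)
    (hshadow : ∀ δ > (0 : ℝ), ∃ δ' > (0 : ℝ), ∀ (x : X) (n : ℕ), 0 < n →
      dist x (f^[n] x) < δ' → ∃ p : X, f^[n] p = p ∧
        ∀ j < n, dist (f^[j] x) (f^[j] p) < δ)
    (g : X → ℝ) (hg : Continuous g)
    (hper : ∀ (p : X) (n : ℕ), 0 < n → f^[n] p = p →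
      ∑ j ∈ Finset.range n, g (f^[j] p) = 0)
    (x : X) (nk : ℕ → ℕ) (hmono : StrictMono nk) (hpos : ∀ k, 0 < nk k)
    (hrec : Tendsto (fun k => dist x (f^[nk k] x)) atTop (nhds 0)) :
    Tendsto (fun k =>
      (∑ j ∈ Finset.range (nk k), g (f^[j] x)) / (nk k : ℝ)) atTop (nhds 0) := by
  rw [Metric.tendsto_atTop]
  intro ε hε
  obtain ⟨δ, hδ, hδg⟩ := Metric.uniformContinuous_iff.mp
    (CompactSpace.uniformContinuous_of_continuous hg) (ε / 2) (by positivity)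
  obtain ⟨δ', hδ', hsh⟩ := hshadow δ hδ
  obtain ⟨N, hN⟩ := Metric.tendsto_atTop.mp hrec δ' hδ'
  refine ⟨N, fun k hk => ?_⟩
  have hd : dist x (f^[nk k] x) < δ' := by
    have := hN k hk
    rwa [Real.dist_eq, sub_zero, abs_of_nonneg dist_nonneg] at this
  obtain ⟨p, hp, hclose⟩ := hsh x (nk k) (hpos k) hd
  set n := nk k with hn
  have hn0 : 0 < n := hpos k
  have hsum : |∑ j ∈ Finset.range n, g (f^[j] x)| ≤ n * (ε / 2) := by
    have heq : ∑ j ∈ Finset.range n, g (f^[j] x)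
        = ∑ j ∈ Finset.range n, (g (f^[j] x) - g (f^[j] p)) := by
      rw [Finset.sum_sub_distrib, hper p n hn0 hp, sub_zero]
    rw [heq]
    calc |∑ j ∈ Finset.range n, (g (f^[j] x) - g (f^[j] p))|
        ≤ ∑ j ∈ Finset.range n, |g (f^[j] x) - g (f^[j] p)| :=
          Finset.abs_sum_le_sum_abs _ _
      _ ≤ ∑ _j ∈ Finset.range n, (ε / 2) := by
          refine Finset.sum_le_sum fun j hj => le_of_lt ?_
          rw [← Real.dist_eq]
          exact hδg (hclose j (Finset.mem_range.mp hj))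
      _ = n * (ε / 2) := by
          rw [Finset.sum_const, Finset.card_range, nsmul_eq_mul]
  rw [Real.dist_eq, sub_zero, abs_div, Nat.abs_cast]
  have hncast : (0 : ℝ) < n := by exact_mod_cast hn0
  calc |∑ j ∈ Finset.range n, g (f^[j] x)| / n ≤ (n * (ε / 2)) / n := by gcongr
    _ = ε / 2 := by field_simp
    _ < ε := by linarith
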